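/- arXiv:1905.00920 — 9 statements merged into one kernel-verified Lean document; each statement's English description precedes it below -/
import Mathlib

section
/- Let K be a coherent product on a nonempty set Z, and define the distance d(z,z') := Real.sqrt (Re (K z z) + Re (K z' z') - 2 * Re (K z z')). Then for all z, z' ∈ Z the radicand Re (K z z) + Re (K z' z') - 2 * Re (K z z') is nonnegative (so d(z,z') is a well-defined nonnegative real number), and d satisfies the triangle inequality: d(x,z) ≤ d(x,y) + d(y,z) for all x, y, z ∈ Z. -/
open scoped ComplexConjugate

noncomputable section

/-- A coherent product on `Z`: Hermitian and all finite Gram matrices positive semidefinite. -/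
def IsCoherentProduct {Z : Type*} (K : Z → Z → ℂ) : Prop :=
  (∀ z z' : Z, conj (K z z') = K z' z) ∧
  ∀ (n : ℕ) (z : Fin n → Z) (c : Fin n → ℂ),
    ∃ r : ℝ, 0 ≤ r ∧ (∑ j, ∑ k, conj (c j) * K (z j) (z k) * c k) = (r : ℂ)

/-- The distance associated to a coherent product. -/
def cohDist {Z : Type*} (K : Z → Z → ℂ) (z z' : Z) : ℝ :=
  Real.sqrt ((K z z).re + (K z' z').re - 2 * (K z z').re)

/-! `d(x,y)²` is the squared seminorm `‖e_x - e_y‖²` of the Gram form of `K`. Along the line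
`(e_x - e_y) + t (e_y - e_z)` this form is a nonnegative quadratic in `t`, so its discriminant is
nonpositive; that is Cauchy–Schwarz for `e_x - e_y` and `e_y - e_z`, which gives
`d(x,z)² ≤ (d(x,y) + d(y,z))²`. -/

theorem Real.sqrt_le_sqrt_add_sqrt_of_quadratic_nonneg {a b c : ℝ} (ha : 0 ≤ a) (hb : 0 ≤ b)
    (h : ∀ t : ℝ, 0 ≤ b * (t * t) + (c - a - b) * t + a) : √c ≤ √a + √b := by
  have hdisc : (c - a - b) ^ 2 ≤ (2 * √a * √b) ^ 2 := by
    have hneg := discrim_le_zero h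
    rw [discrim] at hneg
    nlinarith [Real.sq_sqrt ha, Real.sq_sqrt hb]
  have hmid : c - a - b ≤ 2 * √a * √b :=
    (abs_le_of_sq_le_sq' hdisc (by positivity)).2
  exact Real.sqrt_le_iff.2 ⟨by positivity, by nlinarith [Real.sq_sqrt ha, Real.sq_sqrt hb]⟩

def cohRadicand {Z : Type*} (K : Z → Z → ℂ) (z z' : Z) : ℝ :=
  (K z z).re + (K z' z').re - 2 * (K z z').re

namespace IsCoherentProduct

variable {Z : Type*} {K : Z → Z → ℂ}

theorem re_symm (hK : IsCoherentProduct K) (z z' : Z) : (K z z').re = (K z' z).re := by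
  rw [← hK.1 z z', Complex.conj_re]

theorem re_gram_nonneg (hK : IsCoherentProduct K) {n : ℕ} (z : Fin n → Z) (c : Fin n → ℝ) :
    0 ≤ ∑ j, ∑ k, c j * c k * (K (z j) (z k)).re := by
  obtain ⟨r, hr, heq⟩ := hK.2 n z (fun j => (c j : ℂ))
  have hterm : ∀ j k, (conj (c j : ℂ) * K (z j) (z k) * c k).re
      = c j * c k * (K (z j) (z k)).re := by
    intro j k
    rw [Complex.conj_ofReal, mul_right_comm, ← Complex.ofReal_mul, Complex.re_ofReal_mul]
  have hre := congrArg Complex.re heq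
  simp only [Complex.re_sum, Complex.ofReal_re, hterm] at hre
  exact hre ▸ hr

theorem cohRadicand_nonneg (hK : IsCoherentProduct K) (z z' : Z) : 0 ≤ cohRadicand K z z' := by
  have h := hK.re_gram_nonneg ![z, z'] ![1, -1]
  simp only [Fin.sum_univ_two, Matrix.cons_val_zero, Matrix.cons_val_one] at h
  unfold cohRadicand
  linarith [hK.re_symm z z']

theorem cohRadicand_line_nonneg (hK : IsCoherentProduct K) (x y z : Z) (t : ℝ) :
    0 ≤ cohRadicand K y z * (t * t)
      + (cohRadicand K x z - cohRadicand K x y - cohRadicand K y z) * t + cohRadicand K x y := by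
  have h := hK.re_gram_nonneg ![x, y, z] ![1, t - 1, -t]
  simp only [Fin.sum_univ_three, Matrix.cons_val_zero, Matrix.cons_val_one,
    Matrix.cons_val_two, Matrix.tail_cons, Matrix.head_cons] at h
  unfold cohRadicand
  nlinarith [hK.re_symm x y, hK.re_symm x z, hK.re_symm y z]

theorem cohDist_triangle (hK : IsCoherentProduct K) (x y z : Z) :
    cohDist K x z ≤ cohDist K x y + cohDist K y z :=
  Real.sqrt_le_sqrt_add_sqrt_of_quadratic_nonneg (hK.cohRadicand_nonneg x y)
    (hK.cohRadicand_nonneg y z) (hK.cohRadicand_line_nonneg x y z)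

end IsCoherentProduct

theorem stmt_0_general {Z : Type*} (K : Z → Z → ℂ) (hK : IsCoherentProduct K) :
    (∀ z z' : Z, 0 ≤ (K z z).re + (K z' z').re - 2 * (K z z').re) ∧
    (∀ x y z : Z, cohDist K x z ≤ cohDist K x y + cohDist K y z) :=
  ⟨hK.cohRadicand_nonneg, hK.cohDist_triangle⟩

/-- the radicand is nonnegative and the coherent distance satisfies
the triangle inequality. -/
theorem stmt_0 {Z : Type*} [Nonempty Z] (K : Z → Z → ℂ) (hK : IsCoherentProduct K) :
    (∀ z z' : Z, 0 ≤ (K z z).re + (K z' z').re - 2 * (K z z').re) ∧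
    (∀ x y z : Z, cohDist K x z ≤ cohDist K x y + cohDist K y z) :=
  stmt_0_general K hK
end
end

section
/- Let K be a coherent product on a nonempty set Z, and define the distance d(z,z') := Real.sqrt (Re (K z z) + Re (K z' z') - 2 * Re (K z z')). Then for all z, z' ∈ Z one has d(z,z') = 0 if and only if K w z = K w z' for all w ∈ Z. In particular, d is a metric on Z (i.e., d(z,z') = 0 implies z = z') if and only if the coherent space (Z,K) is nondegenerate. -/
open scoped ComplexConjugate

noncomputable section

/-! The proof reads `K` as the inner product of the "vectors" `δ_z`, so that `cohDist K z z'` is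
`‖δ_z - δ_z'‖`. If this norm vanishes, positivity of the Gram matrix of `(w, z, z')` with
coefficients `(1, b, -b)` gives `0 ≤ K w w + 2 Re (b (K w z - K w z'))` for every `b`, which
forces `K w z = K w z'`; the converse is immediate from `K` being Hermitian. -/

theorem nonpos_of_forall_mul_le {a x : ℝ} (h : ∀ t : ℝ, t * x ≤ a) : x ≤ 0 := by
  by_contra! hx
  have := h ((|a| + 1) / x)
  rw [div_mul_cancel₀ _ hx.ne'] at this
  linarith [le_abs_self a]

namespace IsCoherentProduct

variable {Z : Type*} {K : Z → Z → ℂ}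

theorem conj_apply (hK : IsCoherentProduct K) (z z' : Z) : conj (K z z') = K z' z :=
  hK.1 z z'

theorem re_comm (hK : IsCoherentProduct K) (z z' : Z) : (K z' z).re = (K z z').re := by
  rw [← hK.conj_apply, Complex.conj_re]

theorem gram_re_nonneg (hK : IsCoherentProduct K) {n : ℕ} (z : Fin n → Z) (c : Fin n → ℂ) :
    0 ≤ (∑ j, ∑ k, conj (c j) * K (z j) (z k) * c k).re := by
  obtain ⟨r, hr, h⟩ := hK.2 n z c
  rw [h, Complex.ofReal_re]
  exact hr

theorem cohDist_arg_nonneg (hK : IsCoherentProduct K) (z z' : Z) :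
    0 ≤ (K z z).re + (K z' z').re - 2 * (K z z').re := by
  have h := hK.gram_re_nonneg ![z, z'] ![1, -1]
  simp only [Fin.sum_univ_two, Matrix.cons_val_zero, Matrix.cons_val_one, map_one, map_neg,
    one_mul, mul_one, neg_mul, mul_neg, neg_neg, Complex.add_re, Complex.neg_re] at h
  linarith [hK.re_comm z z']

theorem gram_three_re_nonneg (hK : IsCoherentProduct K) (w z z' : Z) (b : ℂ) :
    0 ≤ (K w w).re + 2 * (b * (K w z - K w z')).re
      + Complex.normSq b * ((K z z).re + (K z' z').re - 2 * (K z z').re) := by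
  have h := hK.gram_re_nonneg ![w, z, z'] ![1, b, -b]
  have hgram : (∑ j, ∑ k, conj (![1, b, -b] j) * K (![w, z, z'] j) (![w, z, z'] k)
        * ![1, b, -b] k)
      = K w w + b * (K w z - K w z') + conj (b * (K w z - K w z'))
        + (Complex.normSq b : ℂ) * (K z z - K z z' - K z' z + K z' z') := by
    simp only [Fin.sum_univ_three, Matrix.cons_val_zero, Matrix.cons_val_one,
      Matrix.cons_val_two, Matrix.tail_cons, Matrix.head_cons, map_one, map_neg, map_mul,
      map_sub, hK.conj_apply, Complex.normSq_eq_conj_mul_self]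
    ring
  rw [hgram] at h
  simp only [Complex.add_re, Complex.conj_re, Complex.re_ofReal_mul, Complex.sub_re,
    hK.re_comm z z'] at h
  linear_combination h

theorem cohDist_eq_zero_iff (hK : IsCoherentProduct K) (z z' : Z) :
    cohDist K z z' = 0 ↔ ∀ w : Z, K w z = K w z' := by
  rw [cohDist, Real.sqrt_eq_zero (hK.cohDist_arg_nonneg z z')]
  constructor
  · intro h w
    set D := K w z - K w z'
    have hD : ∀ t : ℝ, t * (2 * Complex.normSq D) ≤ (K w w).re := by
      intro t
      have := hK.gram_three_re_nonneg w z z' (-t * conj D)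
      rw [h, mul_zero, add_zero, mul_assoc, mul_comm (conj D), Complex.mul_conj, neg_mul,
        ← Complex.ofReal_mul, Complex.neg_re, Complex.ofReal_re] at this
      linarith
    have hD0 : Complex.normSq D = 0 := by
      linarith [nonpos_of_forall_mul_le hD, Complex.normSq_nonneg D]
    exact sub_eq_zero.mp (Complex.normSq_eq_zero.mp hD0)
  · intro h
    have h₁ : K z z' = K z z := (h z).symm
    have h₂ : K z z' = K z' z' := by rw [← hK.conj_apply z' z, h z', hK.conj_apply]
    rw [← h₂, h₁]
    ring

theorem forall_apply_eq_iff_forall_eq_apply (hK : IsCoherentProduct K) (z z' : Z) :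
    (∀ w, K w z = K w z') ↔ ∀ w, K z w = K z' w :=
  forall_congr' fun w => by
    rw [← hK.conj_apply, ← hK.conj_apply z', (starRingEnd ℂ).injective.eq_iff]

end IsCoherentProduct

theorem stmt_1_general {Z : Type*} (K : Z → Z → ℂ) (hK : IsCoherentProduct K) :
    (∀ z z' : Z, cohDist K z z' = 0 ↔ ∀ w : Z, K w z = K w z') ∧
    ((∀ z z' : Z, cohDist K z z' = 0 → z = z') ↔
      (∀ z z'' : Z, (∀ z' : Z, K z'' z' = K z z') → z'' = z)) := by
  refine ⟨hK.cohDist_eq_zero_iff, ?_⟩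
  simp only [hK.cohDist_eq_zero_iff, hK.forall_apply_eq_iff_forall_eq_apply]
  exact forall_comm

/-- `d(z,z') = 0` iff `K w z = K w z'` for all `w`; consequently `d` is a
metric (distinct points have nonzero distance) iff the coherent space is nondegenerate. -/
theorem stmt_1 {Z : Type*} [Nonempty Z] (K : Z → Z → ℂ) (hK : IsCoherentProduct K) :
    (∀ z z' : Z, cohDist K z z' = 0 ↔ ∀ w : Z, K w z = K w z') ∧
    ((∀ z z' : Z, cohDist K z z' = 0 → z = z') ↔
      (∀ z z'' : Z, (∀ z' : Z, K z'' z' = K z z') → z'' = z)) :=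
  stmt_1_general K hK
end
end

section
/- (Moore–Aronszajn Theorem, existence part.) Every coherent space has a quantum space: for every coherent product K on a nonempty set Z there exist a complex Hilbert space H and a map f : Z → H such that ⟪f z, f z'⟫ = K z z' for all z, z' ∈ Z and the ℂ-linear span of the range of f is dense in H. -/
/-!
The Hermitian form `⟪f, g⟫ = ∑ conj (f z) * K z z' * g z'` on finitely supported functions
`Z →₀ ℂ` is positive semidefinite because the Gram matrices of `K` are. Hence it makes
`Z →₀ ℂ` a pre-Hilbert space, whose completion `H` (which also quotients out the null vectors) is
a Hilbert space. The point evaluations `f z = single z 1` satisfy `⟪f z, f z'⟫ = K z z'`, and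
their span is dense because it is the image of all of `Z →₀ ℂ`, which is dense in its completion.
-/

open scoped ComplexConjugate

noncomputable section

open scoped ComplexOrder

namespace IsCoherentProduct

variable {Z : Type*} {K : Z → Z → ℂ}

theorem gram_sum_nonneg (hK : IsCoherentProduct K) {ι : Type*} [Fintype ι] (z : ι → Z)
    (c : ι → ℂ) : 0 ≤ ∑ j, ∑ k, conj (c j) * K (z j) (z k) * c k := by
  let e := Fintype.equivFin ι
  obtain ⟨r, hr, hsum⟩ := hK.2 _ (z ∘ e.symm) (c ∘ e.symm)
  have hreindex : ∑ j, ∑ k, conj (c j) * K (z j) (z k) * c k = (r : ℂ) := by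
    rw [← hsum, ← e.symm.sum_comp]
    exact Finset.sum_congr rfl fun j _ => (e.symm.sum_comp _).symm
  rw [hreindex]
  exact Complex.zero_le_real.mpr hr

end IsCoherentProduct

theorem UniformSpace.Completion.dense_span_coe_image {𝕜 E : Type*} [NormedField 𝕜]
    [SeminormedAddCommGroup E] [NormedSpace 𝕜 E] {s : Set E} (hs : Submodule.span 𝕜 s = ⊤) :
    Dense (Submodule.span 𝕜 (((↑) : E → Completion E) '' s) : Set (Completion E)) := by
  refine denseRange_coe.mono ?_
  rintro _ ⟨x, rfl⟩
  have hx : x ∈ Submodule.span 𝕜 s := hs ▸ Submodule.mem_top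
  induction hx using Submodule.span_induction with
  | mem y hy => exact Submodule.subset_span ⟨y, hy, rfl⟩
  | zero => exact coe_zero (α := E) ▸ Submodule.zero_mem _
  | add y z _ _ hy hz => exact (coe_add y z).symm ▸ Submodule.add_mem _ hy hz
  | smul a y _ hy => exact (coe_smul a y).symm ▸ Submodule.smul_mem _ a hy

namespace MooreAronszajn

variable {Z : Type*} (K : Z → Z → ℂ)

def cohInner (f g : Z →₀ ℂ) : ℂ :=
  f.sum fun z a => g.sum fun z' b => conj a * K z z' * b

theorem cohInner_add_left (f g h : Z →₀ ℂ) :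
    cohInner K (f + g) h = cohInner K f h + cohInner K g h := by
  refine Finsupp.sum_add_index' (fun _ => by simp) fun z a b => ?_
  simp only [map_add, add_mul, Finsupp.sum_add]

theorem cohInner_smul_left (r : ℂ) (f g : Z →₀ ℂ) :
    cohInner K (r • f) g = conj r * cohInner K f g := by
  rw [cohInner, Finsupp.sum_smul_index' fun _ => by simp, cohInner, Finsupp.mul_sum]
  simp only [Finsupp.mul_sum, smul_eq_mul, map_mul, mul_assoc]

theorem conj_cohInner (hK : IsCoherentProduct K) (f g : Z →₀ ℂ) :
    conj (cohInner K g f) = cohInner K f g := by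
  simp only [cohInner, Finsupp.sum, map_sum, map_mul, Complex.conj_conj]
  rw [Finset.sum_comm]
  refine Finset.sum_congr rfl fun z _ => Finset.sum_congr rfl fun z' _ => ?_
  rw [hK.1]
  ring

theorem cohInner_self_nonneg (hK : IsCoherentProduct K) (f : Z →₀ ℂ) :
    0 ≤ cohInner K f f := by
  have hsum : cohInner K f f = ∑ j : f.support, ∑ k : f.support, conj (f j) * K j k * f k := by
    rw [cohInner, Finsupp.sum, ← Finset.sum_coe_sort]
    exact Finset.sum_congr rfl fun j _ => (Finset.sum_coe_sort _ _).symm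
  rw [hsum]
  exact hK.gram_sum_nonneg (fun j : f.support => (j : Z)) (fun j => f j)

theorem cohInner_single_one (z z' : Z) :
    cohInner K (Finsupp.single z 1) (Finsupp.single z' 1) = K z z' := by
  simp [cohInner]

@[reducible]
def preInnerProductCore (hK : IsCoherentProduct K) :
    PreInnerProductSpace.Core ℂ (Z →₀ ℂ) where
  inner := cohInner K
  conj_inner_symm := conj_cohInner K hK
  re_inner_nonneg f := (Complex.nonneg_iff.mp (cohInner_self_nonneg K hK f)).1
  add_left := cohInner_add_left K
  smul_left f g r := cohInner_smul_left K r f g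

end MooreAronszajn

open UniformSpace MooreAronszajn in
theorem stmt_3_general {Z : Type u} (K : Z → Z → ℂ) (hK : IsCoherentProduct K) :
    ∃ (H : Type u) (_ : NormedAddCommGroup H) (_ : InnerProductSpace ℂ H)
      (_ : CompleteSpace H) (f : Z → H),
      (∀ z z' : Z, (inner ℂ (f z) (f z') : ℂ) = K z z') ∧
      Dense (Submodule.span ℂ (Set.range f) : Set H) := by
  let _ := InnerProductSpace.Core.toSeminormedAddCommGroup (c := preInnerProductCore K hK)
  let _ := InnerProductSpace.ofCore (preInnerProductCore K hK)
  refine ⟨Completion (Z →₀ ℂ), inferInstance, inferInstance, inferInstance,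
    ((↑) : (Z →₀ ℂ) → Completion (Z →₀ ℂ)) ∘ fun z => Finsupp.single z 1,
    fun z z' => (Completion.inner_coe _ _).trans (cohInner_single_one K z z'), ?_⟩
  rw [Set.range_comp]
  refine Completion.dense_span_coe_image ?_
  simpa only [Finsupp.coe_basisSingleOne] using (Finsupp.basisSingleOne (R := ℂ) (ι := Z)).span_eq

/-- Moore–Aronszajn, existence: every coherent space has a quantum space. -/
theorem stmt_3 {Z : Type u} [Nonempty Z] (K : Z → Z → ℂ) (hK : IsCoherentProduct K) :
    ∃ (H : Type u) (_ : NormedAddCommGroup H) (_ : InnerProductSpace ℂ H)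
      (_ : CompleteSpace H) (f : Z → H),
      (∀ z z' : Z, (inner ℂ (f z) (f z') : ℂ) = K z z') ∧
      Dense (Submodule.span ℂ (Set.range f) : Set H) :=
  stmt_3_general K hK
end
end

section
/- (Moore–Aronszajn Theorem, uniqueness part.) The quantum space of a coherent space is unique up to isometry: let K be a coherent product on a nonempty set Z, and let (H₁, f₁) and (H₂, f₂) be two quantum space realizations of (Z, K). Then there exists a ℂ-linear isometric equivalence U : H₁ ≃ H₂ such that U (f₁ z) = f₂ z for all z ∈ Z. -/
open scoped ComplexConjugate

noncomputable section

/-- A quantum space realization of `(Z, K)`: a complex Hilbert space `H` and a map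
`f : Z → H` whose inner products realize `K` and whose range has dense span. -/
def IsQuantumSpace {Z : Type*} (K : Z → Z → ℂ) (H : Type*) [NormedAddCommGroup H]
    [InnerProductSpace ℂ H] [CompleteSpace H] (f : Z → H) : Prop :=
  (∀ z z' : Z, (inner ℂ (f z) (f z') : ℂ) = K z z') ∧
  Dense (Submodule.span ℂ (Set.range f) : Set H)

/-
Two families `v`, `w` with the same Gram matrix have linear combinations of equal norms, so
`∑ cᵢ v i ↦ ∑ cᵢ w i` is a well-defined linear isometry between their spans. Both spans are dense
and the spaces complete, so it extends to a linear isometric equivalence.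
-/

theorem Finsupp.denseRange_linearCombination {R M ι : Type*} [Semiring R] [AddCommMonoid M]
    [Module R M] [TopologicalSpace M] {v : ι → M}
    (hv : Dense (Submodule.span R (Set.range v) : Set M)) :
    DenseRange (Finsupp.linearCombination R v) := by
  rwa [DenseRange, ← LinearMap.coe_range, Finsupp.range_linearCombination]

section GramMatrix

variable {𝕜 ι E F : Type*} [RCLike 𝕜]
  [NormedAddCommGroup E] [InnerProductSpace 𝕜 E] [NormedAddCommGroup F] [InnerProductSpace 𝕜 F]

theorem inner_linearCombination_linearCombination (v : ι → E) (c d : ι →₀ 𝕜) :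
    inner 𝕜 (Finsupp.linearCombination 𝕜 v c) (Finsupp.linearCombination 𝕜 v d) =
      c.sum fun i a => d.sum fun j b => conj a * inner 𝕜 (v i) (v j) * b := by
  rw [Finsupp.linearCombination_apply, Finsupp.linearCombination_apply, Finsupp.sum_inner]
  simp only [inner_smul_left, Finsupp.inner_sum, inner_smul_right, mul_comm _ (conj _ * _)]

theorem norm_linearCombination_eq_of_inner_eq {v : ι → E} {w : ι → F}
    (h : ∀ i j, inner 𝕜 (v i) (v j) = inner 𝕜 (w i) (w j)) (c : ι →₀ 𝕜) :
    ‖Finsupp.linearCombination 𝕜 w c‖ = ‖Finsupp.linearCombination 𝕜 v c‖ := by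
  rw [@norm_eq_sqrt_re_inner 𝕜, @norm_eq_sqrt_re_inner 𝕜,
    inner_linearCombination_linearCombination, inner_linearCombination_linearCombination]
  simp only [h]

theorem exists_linearIsometryEquiv_of_inner_eq [CompleteSpace E] [CompleteSpace F]
    (v : ι → E) (w : ι → F) (h : ∀ i j, inner 𝕜 (v i) (v j) = inner 𝕜 (w i) (w j))
    (hv : Dense (Submodule.span 𝕜 (Set.range v) : Set E))
    (hw : Dense (Submodule.span 𝕜 (Set.range w) : Set F)) :
    ∃ U : E ≃ₗᵢ[𝕜] F, ∀ i, U (v i) = w i := by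
  have hv' := Finsupp.denseRange_linearCombination hv
  have hw' := Finsupp.denseRange_linearCombination hw
  refine ⟨(LinearEquiv.refl 𝕜 (ι →₀ 𝕜)).extendOfIsometry _ _ hv' hw'
    (norm_linearCombination_eq_of_inner_eq h), fun i => ?_⟩
  simpa using (LinearEquiv.refl 𝕜 (ι →₀ 𝕜)).extendOfIsometry_eq _ _ hv' hw'
    (norm_linearCombination_eq_of_inner_eq h) (Finsupp.single i 1)

end GramMatrix

theorem stmt_4_general {Z : Type*} (K : Z → Z → ℂ)
    {H₁ : Type*} [NormedAddCommGroup H₁] [InnerProductSpace ℂ H₁] [CompleteSpace H₁]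
    {H₂ : Type*} [NormedAddCommGroup H₂] [InnerProductSpace ℂ H₂] [CompleteSpace H₂]
    (f₁ : Z → H₁) (f₂ : Z → H₂)
    (h₁ : IsQuantumSpace K H₁ f₁) (h₂ : IsQuantumSpace K H₂ f₂) :
    ∃ U : H₁ ≃ₗᵢ[ℂ] H₂, ∀ z : Z, U (f₁ z) = f₂ z :=
  exists_linearIsometryEquiv_of_inner_eq f₁ f₂ (fun z z' => by rw [h₁.1, h₂.1]) h₁.2 h₂.2

/-- Moore–Aronszajn, uniqueness: the quantum space is unique up to
a linear isometric equivalence mapping coherent states to coherent states. -/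
theorem stmt_4 {Z : Type*} [Nonempty Z] (K : Z → Z → ℂ) (hK : IsCoherentProduct K)
    {H₁ : Type*} [NormedAddCommGroup H₁] [InnerProductSpace ℂ H₁] [CompleteSpace H₁]
    {H₂ : Type*} [NormedAddCommGroup H₂] [InnerProductSpace ℂ H₂] [CompleteSpace H₂]
    (f₁ : Z → H₁) (f₂ : Z → H₂)
    (h₁ : IsQuantumSpace K H₁ f₁) (h₂ : IsQuantumSpace K H₂ f₂) :
    ∃ U : H₁ ≃ₗᵢ[ℂ] H₂, ∀ z : Z, U (f₁ z) = f₂ z :=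
  stmt_4_general K f₁ f₂ h₁ h₂
end
end

section
/- (Quantization Theorem.) Let K be a coherent product on a nonempty set Z, let (H, f) be a quantum space realization of (Z, K), and let A : Z → Z be a coherent map with adjoint B : Z → Z. Then there exists a unique ℂ-linear map Γ(A) from the ℂ-linear span of the range of f to H such that Γ(A) (f z) = f (A z) for all z ∈ Z. In particular, for every n, every c : Fin n → ℂ and every tuple z : Fin n → Z, if Σ_j c j • f (z j) = 0 then Σ_j c j • f (A (z j)) = 0. -/
open scoped ComplexConjugate

noncomputable section

/-- The span of the coherent states. -/
def cohSpan {Z H : Type*} [NormedAddCommGroup H] [InnerProductSpace ℂ H]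
    (f : Z → H) : Submodule ℂ H :=
  Submodule.span ℂ (Set.range f)

/-- The coherent state `f z`, seen as an element of the span of the coherent states. -/
def cohState {Z H : Type*} [NormedAddCommGroup H] [InnerProductSpace ℂ H]
    (f : Z → H) (z : Z) : cohSpan f :=
  ⟨f z, Submodule.subset_span (Set.mem_range_self z)⟩

/-!
Moving `A` across the inner product, `⟪f w, ∑ c j • f (A (z j))⟫ = ⟪f (B w), ∑ c j • f (z j)⟫`.
So if `∑ c j • f (z j) = 0`, the vector `∑ c j • f (A (z j))` lies in the span of the coherent
states and is orthogonal to all of them, hence vanishes. Every linear relation among coherent states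
is thus a relation among their images, so `f z ↦ f (A z)` factors through the span; uniqueness
holds because the coherent states span it.
-/

open Submodule Finsupp LinearMap
open scoped InnerProductSpace

section Lift

variable {R M N : Type*} [Ring R] [AddCommGroup M] [AddCommGroup N] [Module R M] [Module R N]

theorem LinearMap.existsUnique_comp_eq_of_ker_le {Q : Type*} [AddCommGroup Q] [Module R Q]
    {P : M →ₗ[R] N} (hP : Function.Surjective P) {g : M →ₗ[R] Q} (h : ker P ≤ ker g) :
    ∃! T : N →ₗ[R] Q, T ∘ₗ P = g := by
  have hT : ((ker P).liftQ g h ∘ₗ (P.quotKerEquivOfSurjective hP).symm) ∘ₗ P = g := by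
    ext x
    simp [quotKerEquivOfSurjective_symm_apply]
  exact ⟨_, hT, fun T hT' => (cancel_right hP).1 (hT'.trans hT.symm)⟩

theorem Submodule.existsUnique_linearMap_span_range {ι : Type*} {v : ι → M} {w : ι → N}
    (h : ker (linearCombination R v) ≤ ker (linearCombination R w)) :
    ∃! T : span R (Set.range v) →ₗ[R] N,
      ∀ i, T ⟨v i, subset_span (Set.mem_range_self i)⟩ = w i := by
  set u : ι → span R (Set.range v) := fun i => ⟨v i, subset_span (Set.mem_range_self i)⟩
  have hu : (span R (Set.range v)).subtype ∘ₗ linearCombination R u = linearCombination R v := by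
    ext i
    simp [u]
  have hsurj : Function.Surjective (linearCombination R u) := by
    rintro ⟨x, hx⟩
    rw [← range_linearCombination] at hx
    obtain ⟨c, rfl⟩ := hx
    exact ⟨c, Subtype.ext (LinearMap.congr_fun hu c)⟩
  have hker : ker (linearCombination R u) = ker (linearCombination R v) := by
    rw [← hu, ker_comp_of_ker_eq_bot _ (ker_subtype _)]
  have hcomp : ∀ T : span R (Set.range v) →ₗ[R] N,
      T ∘ₗ linearCombination R u = linearCombination R w ↔ ∀ i, T (u i) = w i :=
    fun T => ⟨fun hT i => by simpa using LinearMap.congr_fun hT (single i 1),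
      fun hT => lhom_ext fun i a => by simp [hT]⟩
  exact (existsUnique_congr hcomp).1 (existsUnique_comp_eq_of_ker_le hsurj (hker ▸ h))

end Lift

section Coherent

variable {𝕜 E : Type*} [RCLike 𝕜] [NormedAddCommGroup E] [InnerProductSpace 𝕜 E]

theorem eq_zero_of_mem_span_of_inner_eq_zero {s : Set E} {x : E} (hx : x ∈ span 𝕜 s)
    (h : ∀ u ∈ s, ⟪u, x⟫_𝕜 = 0) : x = 0 := by
  have hle : span 𝕜 s ≤ (𝕜 ∙ x)ᗮ :=
    span_le.2 fun u hu => mem_orthogonal_singleton_iff_inner_left.2 (h u hu)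
  exact inner_self_eq_zero.1 (mem_orthogonal_singleton_iff_inner_left.1 (hle hx))

variable {Z : Type*} {f : Z → E} {A B : Z → Z}

theorem inner_sum_smul_comp_eq (hA : ∀ w z, ⟪f w, f (A z)⟫_𝕜 = ⟪f (B w), f z⟫_𝕜)
    {ι : Type*} (s : Finset ι) (c : ι → 𝕜) (z : ι → Z) (w : Z) :
    ⟪f w, ∑ j ∈ s, c j • f (A (z j))⟫_𝕜 = ⟪f (B w), ∑ j ∈ s, c j • f (z j)⟫_𝕜 := by
  simp only [inner_sum, inner_smul_right, hA]

theorem sum_smul_comp_eq_zero (hA : ∀ w z, ⟪f w, f (A z)⟫_𝕜 = ⟪f (B w), f z⟫_𝕜)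
    {ι : Type*} (s : Finset ι) (c : ι → 𝕜) (z : ι → Z) (h : ∑ j ∈ s, c j • f (z j) = 0) :
    ∑ j ∈ s, c j • f (A (z j)) = 0 := by
  refine eq_zero_of_mem_span_of_inner_eq_zero (s := Set.range f)
    (sum_mem fun j _ => smul_mem _ _ (subset_span (Set.mem_range_self _))) ?_
  rintro _ ⟨w, rfl⟩
  rw [inner_sum_smul_comp_eq hA, h, inner_zero_right]

theorem ker_linearCombination_le_ker_comp (hA : ∀ w z, ⟪f w, f (A z)⟫_𝕜 = ⟪f (B w), f z⟫_𝕜) :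
    ker (linearCombination 𝕜 f) ≤ ker (linearCombination 𝕜 (f ∘ A)) := by
  intro c hc
  simp only [mem_ker, linearCombination_apply, Finsupp.sum, Function.comp_apply] at hc ⊢
  exact sum_smul_comp_eq_zero hA c.support c (fun z => z) hc

end Coherent

theorem stmt_6_general {Z : Type*} (K : Z → Z → ℂ)
    {H : Type*} [NormedAddCommGroup H] [InnerProductSpace ℂ H] [CompleteSpace H]
    (f : Z → H) (hq : IsQuantumSpace K H f)
    (A B : Z → Z) (hAB : ∀ z z' : Z, K z (A z') = K (B z) z') :
    (∃! T : cohSpan f →ₗ[ℂ] H, ∀ z : Z, T (cohState f z) = f (A z)) ∧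
    (∀ (n : ℕ) (c : Fin n → ℂ) (z : Fin n → Z),
      ∑ j, c j • f (z j) = 0 → ∑ j, c j • f (A (z j)) = 0) := by
  have hA : ∀ w z, ⟪f w, f (A z)⟫_ℂ = ⟪f (B w), f z⟫_ℂ := fun w z => by
    rw [hq.1, hq.1, hAB]
  exact ⟨existsUnique_linearMap_span_range (ker_linearCombination_le_ker_comp hA),
    fun n c z => sum_smul_comp_eq_zero hA Finset.univ c z⟩

/-- Quantization theorem: for a coherent map `A` with adjoint `B`, there
is a unique linear map `Γ(A)` on the span of the coherent states with
`Γ(A) (f z) = f (A z)`; in particular vanishing linear combinations of coherent states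
are mapped to vanishing linear combinations. -/
theorem stmt_6 {Z : Type*} [Nonempty Z] (K : Z → Z → ℂ) (hK : IsCoherentProduct K)
    {H : Type*} [NormedAddCommGroup H] [InnerProductSpace ℂ H] [CompleteSpace H]
    (f : Z → H) (hq : IsQuantumSpace K H f)
    (A B : Z → Z) (hAB : ∀ z z' : Z, K z (A z') = K (B z) z') :
    (∃! T : cohSpan f →ₗ[ℂ] H, ∀ z : Z, T (cohState f z) = f (A z)) ∧
    (∀ (n : ℕ) (c : Fin n → ℂ) (z : Fin n → Z),
      ∑ j, c j • f (z j) = 0 → ∑ j, c j • f (A (z j)) = 0) :=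
  stmt_6_general K f hq A B hAB
end
end

section
/- The quantization map is a representation of the semigroup of coherent maps: let K be a coherent product on a nonempty set Z, let (H, f) be a quantum space realization of (Z, K), let A₁ be coherent with adjoint B₁ and A₂ coherent with adjoint B₂, and let Γ(A₁), Γ(A₂), Γ(A₁ ∘ A₂) be the corresponding quantizations on the span S of the coherent states (which exist by the Quantization Theorem). Then Γ(A₂) maps S into S, and Γ(A₁ ∘ A₂) u = Γ(A₁) (Γ(A₂) u) for all u ∈ S; moreover the quantization of the identity map is the identity on S. -/
open scoped ComplexConjugate

noncomputable section

/-!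
The coherent states span `cohSpan f`, so a linear map on it is determined by its values on
them, and it maps into `cohSpan f` as soon as every coherent state does. Both sides of each
identity are linear and agree on coherent states.
-/

section CoherentStates

variable {Z H : Type*} [NormedAddCommGroup H] [InnerProductSpace ℂ H] {f : Z → H}

theorem span_range_cohState : Submodule.span ℂ (Set.range (cohState f)) = ⊤ := by
  have hrange : Set.range (cohState f) = ((↑) : cohSpan f → H) ⁻¹' Set.range f := by
    ext u
    constructor
    · rintro ⟨z, rfl⟩
      exact ⟨z, rfl⟩
    · rintro ⟨z, hz⟩
      exact ⟨z, Subtype.ext hz⟩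
  rw [hrange]
  exact Submodule.span_span_coe_preimage

theorem cohSpan_linearMap_ext {M : Type*} [AddCommGroup M] [Module ℂ M]
    {T T' : cohSpan f →ₗ[ℂ] M} (h : ∀ z, T (cohState f z) = T' (cohState f z)) : T = T' :=
  LinearMap.ext_on_range span_range_cohState h

theorem apply_mem_cohSpan {T : cohSpan f →ₗ[ℂ] H} (h : ∀ z, T (cohState f z) ∈ cohSpan f)
    (u : cohSpan f) : T u ∈ cohSpan f := by
  have hrange : LinearMap.range T ≤ cohSpan f := by
    rw [LinearMap.range_eq_map, ← span_range_cohState, Submodule.map_span_le]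
    rintro _ ⟨z, rfl⟩
    exact h z
  exact hrange (LinearMap.mem_range_self T u)

end CoherentStates

theorem stmt_8_general {Z : Type*}
    {H : Type*} [NormedAddCommGroup H] [InnerProductSpace ℂ H]
    (f : Z → H)
    (A₁ A₂ : Z → Z)
    (T₁ T₂ T₁₂ Tid : cohSpan f →ₗ[ℂ] H)
    (hT₁ : ∀ z : Z, T₁ (cohState f z) = f (A₁ z))
    (hT₂ : ∀ z : Z, T₂ (cohState f z) = f (A₂ z))
    (hT₁₂ : ∀ z : Z, T₁₂ (cohState f z) = f (A₁ (A₂ z)))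
    (hTid : ∀ z : Z, Tid (cohState f z) = f z) :
    (∃ hmem : ∀ u : cohSpan f, T₂ u ∈ cohSpan f,
      ∀ u : cohSpan f, T₁₂ u = T₁ ⟨T₂ u, hmem u⟩) ∧
    (∀ u : cohSpan f, Tid u = (u : H)) := by
  have hmem : ∀ u, T₂ u ∈ cohSpan f :=
    apply_mem_cohSpan fun z => hT₂ z ▸ (cohState f (A₂ z)).2
  have hcomp : T₁₂ = T₁ ∘ₗ T₂.codRestrict (cohSpan f) hmem := by
    refine cohSpan_linearMap_ext fun z => ?_
    have hcodRestrict : T₂.codRestrict (cohSpan f) hmem (cohState f z) = cohState f (A₂ z) :=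
      Subtype.ext (hT₂ z)
    rw [hT₁₂, LinearMap.comp_apply, hcodRestrict, hT₁]
  have hid : Tid = (cohSpan f).subtype := cohSpan_linearMap_ext hTid
  exact ⟨⟨hmem, fun u => LinearMap.congr_fun hcomp u⟩, fun u => LinearMap.congr_fun hid u⟩

/-- the quantization map is a representation of the semigroup of coherent
maps: `Γ(A₂)` maps the span `S` of the coherent states into itself,
`Γ(A₁ ∘ A₂) = Γ(A₁) ∘ Γ(A₂)` on `S`, and the quantization of the identity map
is the identity on `S`. -/
theorem stmt_8 {Z : Type*} [Nonempty Z] (K : Z → Z → ℂ) (hK : IsCoherentProduct K)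
    {H : Type*} [NormedAddCommGroup H] [InnerProductSpace ℂ H] [CompleteSpace H]
    (f : Z → H) (hq : IsQuantumSpace K H f)
    (A₁ B₁ A₂ B₂ : Z → Z)
    (h₁ : ∀ z z' : Z, K z (A₁ z') = K (B₁ z) z')
    (h₂ : ∀ z z' : Z, K z (A₂ z') = K (B₂ z) z')
    (T₁ T₂ T₁₂ Tid : cohSpan f →ₗ[ℂ] H)
    (hT₁ : ∀ z : Z, T₁ (cohState f z) = f (A₁ z))
    (hT₂ : ∀ z : Z, T₂ (cohState f z) = f (A₂ z))
    (hT₁₂ : ∀ z : Z, T₁₂ (cohState f z) = f (A₁ (A₂ z)))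
    (hTid : ∀ z : Z, Tid (cohState f z) = f z) :
    (∃ hmem : ∀ u : cohSpan f, T₂ u ∈ cohSpan f,
      ∀ u : cohSpan f, T₁₂ u = T₁ ⟨T₂ u, hmem u⟩) ∧
    (∀ u : cohSpan f, Tid u = (u : H)) :=
  stmt_8_general f A₁ A₂ T₁ T₂ T₁₂ Tid hT₁ hT₂ hT₁₂ hTid
end
end

section
/- The Klauder coherent product is a coherent product: let V be a complex inner product space with inner product ⟪·,·⟫ (conjugate-linear in the first argument). Then on the set Z = ℂ × V, the map K defined by K (z₀, z) (z₀', z') := Complex.exp (conj z₀ + z₀' + ⟪z, z'⟫) is a coherent product. -/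
open scoped ComplexConjugate

noncomputable section

/-!
Every Gram matrix of the Klauder product is the Hadamard product of the rank-one matrix
`conj (e j) * e k`, with `e j = exp (z j).1`, and the entrywise exponential of the Gram matrix `G` of
the vectors `(z j).2`. That exponential is the sum of the series `∑ (m !)⁻¹ • G^{⊙m}` whose terms
are positive semidefinite by the Schur product theorem, and positive semidefiniteness is a closed
condition.
-/

open scoped Matrix Nat ComplexOrder

namespace Matrix

variable {𝕜 n : Type*} [RCLike 𝕜]

theorem isClosed_setOf_posSemidef [Fintype n] : IsClosed {A : Matrix n n 𝕜 | A.PosSemidef} := by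
  simp only [posSemidef_iff_dotProduct_mulVec, Set.ofPred_and, Set.ofPred_forall]
  exact (isClosed_eq continuous_id.matrix_conjTranspose continuous_id).inter
    (isClosed_iInter fun x => isClosed_le continuous_const
      (continuous_const.dotProduct (continuous_id.matrix_mulVec continuous_const)))

theorem PosSemidef.of_hasSum [Fintype n] {ι : Type*} {f : ι → Matrix n n 𝕜} {A : Matrix n n 𝕜}
    (hf : HasSum f A) (h : ∀ i, (f i).PosSemidef) : A.PosSemidef :=
  isClosed_setOf_posSemidef.mem_of_tendsto hf
    (.of_forall fun s => posSemidef_sum s fun i _ => h i)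

theorem PosSemidef.map_pow [Finite n] {A : Matrix n n 𝕜} (hA : A.PosSemidef) (m : ℕ) :
    (A.map (· ^ m)).PosSemidef := by
  induction m with
  | zero =>
    convert posSemidef_vecMulVec_star_self (1 : n → 𝕜) using 1
    ext i j
    simp [vecMulVec]
  | succ m ih =>
    convert ih.hadamard hA using 1
    ext i j
    simp [pow_succ]

theorem PosSemidef.map_exp [Fintype n] {A : Matrix n n ℂ} (hA : A.PosSemidef) :
    (A.map Complex.exp).PosSemidef := by
  refine .of_hasSum (f := fun m => (m ! : ℝ)⁻¹ • A.map (· ^ m)) ?_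
    fun m => (hA.map_pow m).smul (by positivity)
  refine Pi.hasSum.mpr fun i => Pi.hasSum.mpr fun j => ?_
  simpa [Complex.exp_eq_exp_ℂ, div_eq_inv_mul] using NormedSpace.expSeries_div_hasSum_exp (A i j)

end Matrix

open Matrix

theorem IsCoherentProduct.of_posSemidef {Z : Type*} {K : Z → Z → ℂ}
    (hK : ∀ n (z : Fin n → Z), (of fun j k => K (z j) (z k)).PosSemidef) :
    IsCoherentProduct K := by
  refine ⟨fun z z' => (hK 2 ![z', z]).isHermitian.apply 0 1, fun n z c => ?_⟩
  obtain ⟨-, hnonneg⟩ := posSemidef_iff_dotProduct_mulVec.mp (hK n z)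
  obtain ⟨r, hr, hrc⟩ := RCLike.nonneg_iff_exists_ofReal.mp (hnonneg c)
  refine ⟨r, hr, .trans ?_ hrc.symm⟩
  simp only [dotProduct, mulVec, Finset.mul_sum, of_apply, Pi.star_apply, RCLike.star_def,
    mul_assoc]

/-- the Klauder coherent product on `ℂ × V` is a coherent product. -/
theorem stmt_15 {V : Type*} [NormedAddCommGroup V] [InnerProductSpace ℂ V] :
    IsCoherentProduct (fun (z z' : ℂ × V) =>
      Complex.exp (conj z.1 + z'.1 + (inner ℂ z.2 z'.2 : ℂ))) := by
  refine IsCoherentProduct.of_posSemidef fun n z => ?_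
  let e : Fin n → ℂ := fun j => Complex.exp (z j).1
  have hfactor : (of fun j k => Complex.exp (conj (z j).1 + (z k).1 + inner ℂ (z j).2 (z k).2)) =
      vecMulVec (star e) e ⊙ (gram ℂ fun j => (z j).2).map Complex.exp := by
    ext j k
    simp [e, vecMulVec, Complex.exp_add, ← Complex.exp_conj]
  rw [hfactor]
  exact (posSemidef_vecMulVec_star_self e).hadamard (posSemidef_gram ℂ _).map_exp
end
end

section
/- The Möbius coherent product is a coherent product: let Z = {z : Fin 2 → ℂ | |z 0| > |z 1|}. Then for z, z' ∈ Z the complex number conj (z 0) * z' 0 - conj (z 1) * z' 1 is nonzero, and the map K defined by K z z' := (conj (z 0) * z' 0 - conj (z 1) * z' 1)⁻¹ is a coherent product on Z. -/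
open scoped ComplexConjugate

noncomputable section

/-!
Expanding the Möbius product as a geometric series,
`(conj a * a' - conj b * b')⁻¹ = ∑ₘ conj (bᵐ / aᵐ⁺¹) * (b'ᵐ / a'ᵐ⁺¹)`,
exhibits it as a sum of rank-one kernels `conj (f z) * f z'`. Every Gram form of such a
kernel is `∑ₘ |∑ₖ cₖ fₘ(zₖ)|² ≥ 0`.
-/

theorem IsCoherentProduct.of_hasSum {Z ι : Type*} {K : Z → Z → ℂ} (f : ι → Z → ℂ)
    (hK : ∀ z z', HasSum (fun m => conj (f m z) * f m z') (K z z')) :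
    IsCoherentProduct K := by
  refine ⟨fun z z' => ?_, fun n z c => ?_⟩
  · refine ((hK z z').map (starRingEnd ℂ) Complex.continuous_conj).unique ?_
    simpa only [Function.comp_def, map_mul, Complex.conj_conj, mul_comm] using hK z' z
  · set S : ι → ℂ := fun m => ∑ k, c k * f m (z k)
    have hGram : HasSum (fun m => (Complex.normSq (S m) : ℂ))
        (∑ j, ∑ k, conj (c j) * K (z j) (z k) * c k) := by
      have hterm : ∀ m, (Complex.normSq (S m) : ℂ) =
          ∑ j, ∑ k, conj (c j) * (conj (f m (z j)) * f m (z k)) * c k := by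
        intro m
        simp only [S, Complex.normSq_eq_conj_mul_self, map_sum, map_mul, Finset.sum_mul,
          Finset.mul_sum]
        rw [Finset.sum_comm]
        exact Finset.sum_congr rfl fun j _ => Finset.sum_congr rfl fun k _ => by ring
      simp only [hterm]
      exact hasSum_sum fun j _ => hasSum_sum fun k _ =>
        ((hK (z j) (z k)).mul_left _).mul_right _
    obtain ⟨r, hr⟩ := Complex.summable_ofReal.mp hGram.summable
    exact ⟨r, hr.nonneg fun m => Complex.normSq_nonneg _,
      hGram.unique (Complex.hasSum_ofReal.mpr hr)⟩

section Mobius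

variable {a a' b b' : ℂ}

theorem norm_conj_mul_lt_norm_conj_mul (h : ‖b‖ < ‖a‖) (h' : ‖b'‖ < ‖a'‖) :
    ‖conj b * b'‖ < ‖conj a * a'‖ := by
  simpa only [norm_mul, Complex.norm_conj] using
    mul_lt_mul'' h h' (norm_nonneg _) (norm_nonneg _)

theorem conj_mul_sub_conj_mul_ne_zero (h : ‖b‖ < ‖a‖) (h' : ‖b'‖ < ‖a'‖) :
    conj a * a' - conj b * b' ≠ 0 :=
  sub_ne_zero_of_ne fun h0 => (norm_conj_mul_lt_norm_conj_mul h h').ne' (congrArg norm h0)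

theorem hasSum_conj_div_pow_mul_div_pow (h : ‖b‖ < ‖a‖) (h' : ‖b'‖ < ‖a'‖) :
    HasSum (fun m : ℕ => conj (b ^ m / a ^ (m + 1)) * (b' ^ m / a' ^ (m + 1)))
      (conj a * a' - conj b * b')⁻¹ := by
  have hA : conj a * a' ≠ 0 :=
    norm_pos_iff.mp ((norm_nonneg _).trans_lt (norm_conj_mul_lt_norm_conj_mul h h'))
  set q := conj b * b' / (conj a * a') with hq_def
  have hq : ‖q‖ < 1 := by
    rw [norm_div, div_lt_one (norm_pos_iff.mpr hA)]
    exact norm_conj_mul_lt_norm_conj_mul h h'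
  have hterm : ∀ m : ℕ, conj (b ^ m / a ^ (m + 1)) * (b' ^ m / a' ^ (m + 1)) =
      (conj a * a')⁻¹ * q ^ m := by
    intro m
    obtain ⟨hca, ha'⟩ := mul_ne_zero_iff.mp hA
    rw [hq_def, map_div₀, map_pow, map_pow, div_pow, mul_pow, mul_pow]
    field_simp
    ring
  have hval : (conj a * a' - conj b * b')⁻¹ = (conj a * a')⁻¹ * (1 - q)⁻¹ := by
    rw [← mul_inv, mul_sub, mul_one, mul_div_cancel₀ _ hA]
  simpa only [hterm, hval] using (hasSum_geometric_of_norm_lt_one hq).mul_left (conj a * a')⁻¹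

end Mobius

/-- the Möbius coherent product. On `Z = {z : Fin 2 → ℂ | |z 0| > |z 1|}`
the quantity `conj (z 0) * z' 0 - conj (z 1) * z' 1` never vanishes, and its inverse
is a coherent product on `Z`. -/
theorem stmt_16 :
    (∀ z z' : {v : Fin 2 → ℂ // ‖v 1‖ < ‖v 0‖},
      conj (z.1 0) * z'.1 0 - conj (z.1 1) * z'.1 1 ≠ 0) ∧
    IsCoherentProduct (fun (z z' : {v : Fin 2 → ℂ // ‖v 1‖ < ‖v 0‖}) =>
      (conj (z.1 0) * z'.1 0 - conj (z.1 1) * z'.1 1)⁻¹) :=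
  ⟨fun z z' => conj_mul_sub_conj_mul_ne_zero z.2 z'.2,
    IsCoherentProduct.of_hasSum (fun m z => z.1 1 ^ m / z.1 0 ^ (m + 1))
      fun z z' => hasSum_conj_div_pow_mul_div_pow z.2 z'.2⟩
end
end

section
/- The de Branges kernel of a de Branges function is a coherent product on the open upper half-plane: let E : ℂ → ℂ be entire, define E♯(z) := conj (E (conj z)), and assume |E♯(z)| < |E(z)| whenever Im z > 0 (i.e., E is a de Branges function). For w, z in the open upper half-plane U = {z : ℂ | 0 < Im z} define K w z := (E z * conj (E w) - E♯ z * conj (E♯ w)) / (2 * Complex.I * (conj w - z)). Then the denominator is nonzero on U × U, conj (K w z) = K z w for all w, z ∈ U, and for every n, every tuple w : Fin n → U and every c : Fin n → ℂ, the sum Σ_{j,k} conj (c j) * K (w j) (w k) * (c k) is a nonnegative real number; that is, K is a coherent product on U. -/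
open scoped ComplexConjugate

noncomputable section

/-- The conjugate-reflected function `E♯(z) = conj (E (conj z))`. -/
def eSharp (E : ℂ → ℂ) (z : ℂ) : ℂ := conj (E (conj z))

/-- The open upper half-plane. -/
def UpperHalf : Type := {z : ℂ // 0 < z.im}

/-- The de Branges kernel of an entire function `E`. -/
def deBrangesKernel (E : ℂ → ℂ) (w z : UpperHalf) : ℂ :=
  (E z.1 * conj (E w.1) - eSharp E z.1 * conj (eSharp E w.1)) /
    (2 * Complex.I * (conj w.1 - z.1))

/-!
With `Θ = E♯ / E`, which is holomorphic and bounded by `1` on the upper half-plane, the de Branges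
kernel is `conj (E w) E z (1 - Θ z conj (Θ w)) / (2 i (w̄ - z))`, so its positivity is the Pick
positivity of the Schur function `Θ`.

On a disk, Pick positivity comes from the Hardy space of the boundary circle: by Cauchy's formula
the Szegő kernels `kⱼ` reproduce point values, so for `φ = ∑ d̄ⱼ kⱼ` and `ψ = ∑ (dⱼ Θ(wⱼ))‾ kⱼ`
one gets `‖ψ‖² = ⟪Θ ψ, φ⟫ ≤ (‖ψ‖² + ‖φ‖²) / 2`, while the Pick form equals `‖φ‖² - ‖ψ‖²`.
The disks `ball (i / t) √(t⁻² - 1)` exhaust the upper half-plane as `t → 0⁺`, and their Szegő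
kernels, rescaled by `t⁻¹`, converge to `1 / (i (w̄ - z))`.
-/

open scoped ComplexOrder
open Complex Metric Filter Topology Real

section SzegoKernel

variable {a w z : ℂ} {ρ : ℝ}

def szegoKernel (a : ℂ) (ρ : ℝ) (w z : ℂ) : ℂ := ((ρ : ℂ) ^ 2 - conj (w - a) * (z - a))⁻¹

lemma szegoKernel_denom_ne_zero (hw : w ∈ ball a ρ) (hz : z ∈ closedBall a ρ) :
    (ρ : ℂ) ^ 2 - conj (w - a) * (z - a) ≠ 0 := by
  rw [mem_ball_iff_norm] at hw
  rw [mem_closedBall_iff_norm] at hz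
  have hlt : ‖conj (w - a) * (z - a)‖ < ‖(ρ : ℂ) ^ 2‖ := by
    rw [norm_mul, RCLike.norm_conj, norm_pow, norm_real, Real.norm_eq_abs,
      abs_of_pos ((norm_nonneg _).trans_lt hw)]
    nlinarith [norm_nonneg (w - a), norm_nonneg (z - a)]
  intro h
  rw [sub_eq_zero] at h
  rw [h] at hlt
  exact hlt.false

lemma differentiableOn_szegoKernel (hw : w ∈ ball a ρ) :
    DifferentiableOn ℂ (szegoKernel a ρ w) (closedBall a ρ) :=
  ((differentiableOn_const _).sub ((differentiableOn_id.sub_const a).const_mul _)).inv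
    fun _ hz => szegoKernel_denom_ne_zero hw hz

/-- On the circle `conj (z - a) = ρ² / (z - a)`, which turns the kernel into a Cauchy kernel. -/
lemma conj_szegoKernel_of_mem_sphere (hw : w ∈ ball a ρ) (hz : z ∈ sphere a ρ) :
    conj (szegoKernel a ρ w z) = (z - a) / ((ρ : ℂ) ^ 2 * (z - w)) := by
  have hza : conj (z - a) * (z - a) = (ρ : ℂ) ^ 2 := by
    rw [mul_comm, mul_conj', ← mem_sphere_iff_norm.mp hz]
  have hzw : z - w ≠ 0 := by
    rintro hzw
    rw [sub_eq_zero.mp hzw, mem_sphere_iff_norm] at hz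
    exact (mem_ball_iff_norm.mp hw).ne hz
  have hden : (ρ : ℂ) ^ 2 - (w - a) * conj (z - a) ≠ 0 := by
    intro h
    apply szegoKernel_denom_ne_zero hw (sphere_subset_closedBall hz)
    simpa using congrArg conj h
  have hρ : (ρ : ℂ) ^ 2 ≠ 0 := by simpa using (pos_of_mem_ball hw).ne'
  rw [szegoKernel, map_inv₀, map_sub, map_mul, conj_conj, map_pow, conj_ofReal, inv_eq_one_div,
    div_eq_div_iff hden (mul_ne_zero hρ hzw)]
  linear_combination (w - a) * hza

end SzegoKernel

section CircleInner

variable {a w : ℂ} {ρ : ℝ} {f g h u : ℂ → ℂ}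

def circleInner (a : ℂ) (ρ : ℝ) (h g : ℂ → ℂ) : ℂ :=
  ∫ θ in 0..2 * π, h (circleMap a ρ θ) * conj (g (circleMap a ρ θ))

def circleNormSq (a : ℂ) (ρ : ℝ) (g : ℂ → ℂ) : ℝ :=
  ∫ θ in 0..2 * π, ‖g (circleMap a ρ θ)‖ ^ 2

lemma circleNormSq_nonneg : 0 ≤ circleNormSq a ρ g :=
  intervalIntegral.integral_nonneg (by positivity) fun _ _ => by positivity

lemma circleInner_self : circleInner a ρ g g = circleNormSq a ρ g := by
  simp only [circleInner, circleNormSq, mul_conj', ← intervalIntegral.integral_ofReal]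
  push_cast
  rfl

lemma ContinuousOn.continuous_comp_circleMap {E : Type*} [TopologicalSpace E] {f : ℂ → E}
    (hf : ContinuousOn f (sphere a ρ)) (hρ : 0 ≤ ρ) : Continuous fun θ => f (circleMap a ρ θ) :=
  hf.comp_continuous (continuous_circleMap a ρ) (circleMap_mem_sphere a hρ)

lemma circleInner_szegoKernel (hh : DifferentiableOn ℂ h (closedBall a ρ)) (hw : w ∈ ball a ρ) :
    circleInner a ρ h (szegoKernel a ρ w) = 2 * π / ρ ^ 2 * h w := by
  have hρ : ρ ≠ 0 := (pos_of_mem_ball hw).ne'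
  have hpt : ∀ θ, deriv (circleMap a ρ) θ • ((circleMap a ρ θ - w)⁻¹ • h (circleMap a ρ θ)) =
      I * ρ ^ 2 * (h (circleMap a ρ θ) * conj (szegoKernel a ρ w (circleMap a ρ θ))) := by
    intro θ
    rw [deriv_circleMap, conj_szegoKernel_of_mem_sphere hw
      (circleMap_mem_sphere a (pos_of_mem_ball hw).le θ), circleMap_sub_center, smul_eq_mul,
      smul_eq_mul]
    field_simp
  have key := hh.circleIntegral_sub_inv_smul hw
  simp_rw [circleIntegral, hpt, smul_eq_mul] at key
  rw [intervalIntegral.integral_const_mul] at key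
  have key' : (ρ : ℂ) ^ 2 * circleInner a ρ h (szegoKernel a ρ w) = 2 * π * h w :=
    mul_left_cancel₀ I_ne_zero (by rw [circleInner, ← mul_assoc, key]; ring)
  field_simp
  linear_combination key'

lemma intervalIntegrable_circleInner (hρ : 0 ≤ ρ) (hh : ContinuousOn h (sphere a ρ))
    (hg : ContinuousOn g (sphere a ρ)) :
    IntervalIntegrable (fun θ => h (circleMap a ρ θ) * conj (g (circleMap a ρ θ)))
      MeasureTheory.volume 0 (2 * π) :=
  ((hh.continuous_comp_circleMap hρ).mul
    (continuous_conj.comp (hg.continuous_comp_circleMap hρ))).intervalIntegrable _ _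

lemma circleInner_sum_szegoKernel {ι : Type*} [Fintype ι]
    (hh : DifferentiableOn ℂ h (closedBall a ρ)) {w : ι → ℂ} (hw : ∀ j, w j ∈ ball a ρ) (e : ι → ℂ) :
    circleInner a ρ h (fun z => ∑ j, e j * szegoKernel a ρ (w j) z) =
      2 * π / ρ ^ 2 * ∑ j, conj (e j) * h (w j) := by
  simp only [circleInner, map_sum, map_mul, Finset.mul_sum]
  rw [intervalIntegral.integral_finsetSum]
  · refine Finset.sum_congr rfl fun j _ => ?_
    simp_rw [mul_left_comm _ (conj (e j))]
    rw [intervalIntegral.integral_const_mul, ← circleInner, circleInner_szegoKernel hh (hw j)]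
  · intro j _
    simp_rw [mul_left_comm _ (conj (e j))]
    have hk := (differentiableOn_szegoKernel (hw j)).continuousOn.mono sphere_subset_closedBall
    exact (intervalIntegrable_circleInner (pos_of_mem_ball (hw j)).le
      (hh.continuousOn.mono sphere_subset_closedBall) hk).const_mul _

lemma norm_circleInner_mul_le (hρ : 0 ≤ ρ) (hf1 : ∀ z ∈ sphere a ρ, ‖f z‖ ≤ 1)
    (hf : ContinuousOn f (sphere a ρ)) (hu : ContinuousOn u (sphere a ρ))
    (hg : ContinuousOn g (sphere a ρ)) :
    ‖circleInner a ρ (f * u) g‖ ≤ (circleNormSq a ρ u + circleNormSq a ρ g) / 2 := by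
  have hu2 : Continuous fun θ => ‖u (circleMap a ρ θ)‖ ^ 2 :=
    (hu.continuous_comp_circleMap hρ).norm.pow 2
  have hg2 : Continuous fun θ => ‖g (circleMap a ρ θ)‖ ^ 2 :=
    (hg.continuous_comp_circleMap hρ).norm.pow 2
  calc ‖circleInner a ρ (f * u) g‖
      ≤ ∫ θ in 0..2 * π, ‖f (circleMap a ρ θ) * u (circleMap a ρ θ) * conj (g (circleMap a ρ θ))‖ :=
        intervalIntegral.norm_integral_le_integral_norm (by positivity)
    _ ≤ ∫ θ in 0..2 * π, (‖u (circleMap a ρ θ)‖ ^ 2 + ‖g (circleMap a ρ θ)‖ ^ 2) / 2 := by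
        refine intervalIntegral.integral_mono_on (by positivity)
          (intervalIntegrable_circleInner hρ (hf.mul hu) hg).norm
          (((hu2.add hg2).div_const 2).intervalIntegrable _ _) fun θ _ => ?_
        have hf1θ := hf1 _ (circleMap_mem_sphere a hρ θ)
        rw [norm_mul, norm_mul, RCLike.norm_conj]
        nlinarith [norm_nonneg (f (circleMap a ρ θ)), mul_nonneg (norm_nonneg (u (circleMap a ρ θ)))
          (norm_nonneg (g (circleMap a ρ θ))),
          sq_nonneg (‖u (circleMap a ρ θ)‖ - ‖g (circleMap a ρ θ)‖)]
    _ = (circleNormSq a ρ u + circleNormSq a ρ g) / 2 := by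
        rw [intervalIntegral.integral_div, intervalIntegral.integral_add
          (hu2.intervalIntegrable _ _) (hg2.intervalIntegrable _ _), circleNormSq, circleNormSq]

end CircleInner

section Pick

variable {ι : Type*} [Fintype ι] {a : ℂ} {ρ : ℝ} {f : ℂ → ℂ}

lemma differentiableOn_sum_szegoKernel {w : ι → ℂ} (hw : ∀ j, w j ∈ ball a ρ) (e : ι → ℂ) :
    DifferentiableOn ℂ (fun z => ∑ j, e j * szegoKernel a ρ (w j) z) (closedBall a ρ) :=
  DifferentiableOn.fun_sum fun j _ => (differentiableOn_szegoKernel (hw j)).const_mul _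

theorem pick_nonneg_of_ball (hρ : 0 < ρ) (hf : DifferentiableOn ℂ f (closedBall a ρ))
    (hf1 : ∀ z ∈ sphere a ρ, ‖f z‖ ≤ 1) {w : ι → ℂ} (hw : ∀ j, w j ∈ ball a ρ) (d : ι → ℂ) :
    0 ≤ ∑ j, ∑ k, conj (d j) * d k * (1 - f (w k) * conj (f (w j))) *
      szegoKernel a ρ (w j) (w k) := by
  set φ : ℂ → ℂ := fun z => ∑ j, conj (d j) * szegoKernel a ρ (w j) z with hφ_def
  set ψ : ℂ → ℂ := fun z => ∑ j, conj (d j * f (w j)) * szegoKernel a ρ (w j) z with hψ_def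
  have hφ : DifferentiableOn ℂ φ (closedBall a ρ) := differentiableOn_sum_szegoKernel hw _
  have hψ : DifferentiableOn ℂ ψ (closedBall a ρ) := differentiableOn_sum_szegoKernel hw _
  have hφφ : circleInner a ρ φ φ = 2 * π / ρ ^ 2 * ∑ j, d j * φ (w j) := by
    simpa only [conj_conj] using circleInner_sum_szegoKernel hφ hw (fun j => conj (d j))
  have hψψ : circleInner a ρ ψ ψ = 2 * π / ρ ^ 2 * ∑ j, d j * f (w j) * ψ (w j) := by
    simpa only [conj_conj] using circleInner_sum_szegoKernel hψ hw (fun j => conj (d j * f (w j)))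
  have hfψφ : circleInner a ρ (f * ψ) φ = circleInner a ρ ψ ψ := by
    simpa only [conj_conj, Pi.mul_apply, ← mul_assoc, ← hψψ] using
      circleInner_sum_szegoKernel (hf.mul hψ) hw (fun j => conj (d j))
  have hψ_le : circleNormSq a ρ ψ ≤ circleNormSq a ρ φ := by
    have hb := norm_circleInner_mul_le hρ.le hf1 (hf.continuousOn.mono sphere_subset_closedBall)
      (hψ.continuousOn.mono sphere_subset_closedBall)
      (hφ.continuousOn.mono sphere_subset_closedBall)
    rw [hfψφ, circleInner_self, norm_real, Real.norm_of_nonneg circleNormSq_nonneg] at hb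
    linarith
  have hpick : ∑ j, ∑ k, conj (d j) * d k * (1 - f (w k) * conj (f (w j))) *
      szegoKernel a ρ (w j) (w k) =
      (ρ ^ 2 / (2 * π) : ℝ) * (circleInner a ρ φ φ - circleInner a ρ ψ ψ) := by
    have hρπ : ((ρ ^ 2 / (2 * π) : ℝ) : ℂ) * (2 * π / ρ ^ 2) = 1 := by
      push_cast
      field_simp
    rw [hφφ, hψψ, ← mul_sub, ← mul_assoc, hρπ, one_mul, ← Finset.sum_sub_distrib, Finset.sum_comm]
    refine Finset.sum_congr rfl fun k _ => ?_
    simp only [hφ_def, hψ_def, Finset.mul_sum, ← Finset.sum_sub_distrib, map_mul]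
    refine Finset.sum_congr rfl fun j _ => ?_
    ring
  rw [hpick, circleInner_self, circleInner_self, ← ofReal_sub, ← ofReal_mul, zero_le_real]
  exact mul_nonneg (by positivity) (sub_nonneg.mpr hψ_le)

end Pick

section UpperHalfPlane

variable {ι : Type*} [Fintype ι] {t : ℝ} {w z : ℂ} {f : ℂ → ℂ}

lemma szegoKernel_halfPlaneDisk (ht : 0 < t) (ht1 : t ≤ 1) :
    szegoKernel (I / t) √(t⁻¹ ^ 2 - 1) w z = t / (I * (conj w - z) - t * (1 + conj w * z)) := by
  have hsq : ((√(t⁻¹ ^ 2 - 1) : ℝ) : ℂ) ^ 2 = (t : ℂ)⁻¹ ^ 2 - 1 := by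
    have h1 : 1 ≤ t⁻¹ ^ 2 := one_le_pow₀ ((one_le_inv₀ ht).mpr ht1)
    rw [← ofReal_pow, Real.sq_sqrt (sub_nonneg.mpr h1)]
    push_cast
    ring
  have ht0 : (t : ℂ) ≠ 0 := ofReal_ne_zero.mpr ht.ne'
  rw [szegoKernel, hsq, map_sub, map_div₀, conj_I, conj_ofReal,
    div_eq_mul_inv (t : ℂ), ← inv_inv (t : ℂ), ← mul_inv]
  congr 1
  field_simp
  linear_combination I_sq

lemma mem_ball_halfPlaneDisk (ht : 0 < t) (hw : t * (‖w‖ ^ 2 + 1) < 2 * w.im) :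
    w ∈ ball (I / t) √(t⁻¹ ^ 2 - 1) := by
  rw [mem_ball_iff_norm, Real.lt_sqrt (norm_nonneg _), ← normSq_eq_norm_sq, normSq_apply]
  rw [← normSq_eq_norm_sq, normSq_apply] at hw
  simp only [sub_re, sub_im, div_ofReal_re, div_ofReal_im, I_re, I_im, zero_div, sub_zero, one_div]
  have h := mul_lt_mul_of_pos_left hw (inv_pos.mpr ht)
  rw [← mul_assoc, inv_mul_cancel₀ ht.ne', one_mul] at h
  linarith

lemma closedBall_halfPlaneDisk_subset (ht : 0 < t) :
    closedBall (I / t) √(t⁻¹ ^ 2 - 1) ⊆ {z | 0 < z.im} := by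
  intro z hz
  have hρ : √(t⁻¹ ^ 2 - 1) < t⁻¹ := (Real.sqrt_lt' (by positivity)).mpr (by linarith)
  have him : (z - I / t).im = z.im - t⁻¹ := by simp
  have hlow := (neg_le_neg (abs_im_le_norm (z - I / t))).trans (neg_abs_le _)
  have hnorm := mem_closedBall_iff_norm.mp hz
  change 0 < z.im
  linarith

lemma conj_sub_ne_zero_of_im_pos (hw : 0 < w.im) (hz : 0 < z.im) : conj w - z ≠ 0 := by
  intro h
  have him := congrArg im h
  rw [sub_im, conj_im, zero_im] at him
  linarith

theorem pick_nonneg_of_upperHalfPlane (hf : DifferentiableOn ℂ f {z | 0 < z.im})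
    (hf1 : ∀ z, 0 < z.im → ‖f z‖ ≤ 1) {w : ι → ℂ} (hw : ∀ j, 0 < (w j).im) (d : ι → ℂ) :
    0 ≤ ∑ j, ∑ k, conj (d j) * d k * (1 - f (w k) * conj (f (w j))) /
      (I * (conj (w j) - w k)) := by
  set S : ℝ → ℂ := fun t => ∑ j, ∑ k, conj (d j) * d k * (1 - f (w k) * conj (f (w j))) /
    (I * (conj (w j) - w k) - t * (1 + conj (w j) * w k)) with hS
  have hden : ∀ j k, I * (conj (w j) - w k) ≠ 0 := fun j k =>
    mul_ne_zero I_ne_zero (conj_sub_ne_zero_of_im_pos (hw j) (hw k))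
  have hS_cont : ContinuousAt S 0 := by
    rw [hS]
    fun_prop (disch := simpa using hden _ _)
  have hS_nonneg : ∀ᶠ t in 𝓝[>] 0, 0 ≤ S t := by
    have hsmall : ∀ᶠ t in 𝓝[>] (0 : ℝ), ∀ j, t * (‖w j‖ ^ 2 + 1) < 2 * (w j).im :=
      Filter.eventually_all.mpr fun j => nhdsWithin_le_nhds <|
        (continuous_id.mul continuous_const).continuousAt.eventually_lt continuousAt_const
          (by simpa using hw j)
    filter_upwards [self_mem_nhdsWithin, nhdsWithin_le_nhds (eventually_lt_nhds zero_lt_one),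
      hsmall] with t (ht : 0 < t) ht1 hwt
    have hdisk := pick_nonneg_of_ball (Real.sqrt_pos.mpr (sub_pos.mpr
      (one_lt_pow₀ ((one_lt_inv₀ ht).mpr ht1) two_ne_zero)))
      (hf.mono (closedBall_halfPlaneDisk_subset ht)) (fun z hz => hf1 z
        (closedBall_halfPlaneDisk_subset ht (sphere_subset_closedBall hz)))
      (fun j => mem_ball_halfPlaneDisk ht (hwt j)) d
    simp only [szegoKernel_halfPlaneDisk ht ht1.le] at hdisk
    have hSt : S t = (t : ℂ)⁻¹ * ∑ j, ∑ k, conj (d j) * d k * (1 - f (w k) * conj (f (w j))) *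
        (t / (I * (conj (w j) - w k) - t * (1 + conj (w j) * w k))) := by
      simp only [hS, Finset.mul_sum]
      refine Finset.sum_congr rfl fun j _ => Finset.sum_congr rfl fun k _ => ?_
      field_simp
    rw [hSt]
    exact mul_nonneg (by rw [← ofReal_inv, zero_le_real]; positivity) hdisk
  simpa [hS] using ge_of_tendsto (hS_cont.tendsto.mono_left nhdsWithin_le_nhds) hS_nonneg

end UpperHalfPlane

section DeBranges

variable {E : ℂ → ℂ}

lemma differentiable_eSharp (hE : Differentiable ℂ E) : Differentiable ℂ (eSharp E) :=
  fun _ => differentiableAt_conj_conj_iff.mpr (hE _)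

lemma conj_deBrangesKernel (E : ℂ → ℂ) (w z : UpperHalf) :
    conj (deBrangesKernel E w z) = deBrangesKernel E z w := by
  rw [deBrangesKernel, deBrangesKernel, map_div₀]
  congr 1 <;> simp only [eSharp, map_sub, map_mul, conj_conj, map_ofNat, conj_I] <;> ring

lemma deBrangesKernel_eq_pick {w z : UpperHalf} (hw : E w.1 ≠ 0) (hz : E z.1 ≠ 0) :
    deBrangesKernel E w z = 2⁻¹ * (conj (E w.1) * E z.1 *
      (1 - eSharp E z.1 / E z.1 * conj (eSharp E w.1 / E w.1)) / (I * (conj w.1 - z.1))) := by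
  have hw' : conj (E w.1) ≠ 0 := (map_ne_zero _).mpr hw
  rw [deBrangesKernel, map_div₀]
  field_simp

end DeBranges

/-- the de Branges kernel of a de Branges function is a coherent product
on the open upper half-plane. -/
theorem stmt_17 (E : ℂ → ℂ) (hE : Differentiable ℂ E)
    (hdB : ∀ z : ℂ, 0 < z.im → ‖eSharp E z‖ < ‖E z‖) :
    (∀ w z : UpperHalf, 2 * Complex.I * (conj w.1 - z.1) ≠ 0) ∧
    (∀ w z : UpperHalf, conj (deBrangesKernel E w z) = deBrangesKernel E z w) ∧
    (∀ (n : ℕ) (w : Fin n → UpperHalf) (c : Fin n → ℂ),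
      ∃ r : ℝ, 0 ≤ r ∧
        (∑ j, ∑ k, conj (c j) * deBrangesKernel E (w j) (w k) * c k) = (r : ℂ)) := by
  have hE0 : ∀ z : ℂ, 0 < z.im → E z ≠ 0 := fun z hz h0 => by
    simpa [h0] using (norm_nonneg _).trans_lt (hdB z hz)
  refine ⟨fun w z => mul_ne_zero (by simp) (conj_sub_ne_zero_of_im_pos w.2 z.2),
    conj_deBrangesKernel E, fun n w c => ?_⟩
  have hpick := pick_nonneg_of_upperHalfPlane (f := fun z => eSharp E z / E z)
    ((differentiable_eSharp hE).differentiableOn.div hE.differentiableOn hE0)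
    (fun z hz => by
      rw [norm_div, div_le_one (norm_pos_iff.mpr (hE0 z hz))]
      exact (hdB z hz).le)
    (fun j => (w j).2) (fun j => c j * E (w j).1)
  have hsum : ∑ j, ∑ k, conj (c j) * deBrangesKernel E (w j) (w k) * c k =
      2⁻¹ * ∑ j, ∑ k, conj (c j * E (w j).1) * (c k * E (w k).1) *
        (1 - eSharp E (w k).1 / E (w k).1 * conj (eSharp E (w j).1 / E (w j).1)) /
        (I * (conj (w j).1 - (w k).1)) := by
    simp only [Finset.mul_sum]
    refine Finset.sum_congr rfl fun j _ => Finset.sum_congr rfl fun k _ => ?_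
    rw [deBrangesKernel_eq_pick (hE0 _ (w j).2) (hE0 _ (w k).2), map_mul]
    ring
  obtain ⟨r, hr, hr_eq⟩ := RCLike.nonneg_iff_exists_ofReal.mp hpick
  exact ⟨r / 2, by positivity, by
    rw [hsum, ← hr_eq, ← RCLike.ofReal_eq_complex_ofReal]; push_cast; ring⟩
end
end
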